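/- arXiv:math/9712295 — 2 statements merged into one kernel-verified Lean document; each statement's English description precedes it below -/
import Mathlib

section
/- As formal power series in X over ℚ[x] (after clearing the denominators e^X − 1): ( X·e^X/(e^X − 1) − x·X − 1 ) · e^{xX}/(1 − e^X) = d/dX ( X·e^{xX}/(e^X − 1) ). Equivalently, ( X·e^X/(e^X − 1) − x·X − 1 ) · e^{xX}/(1 − e^X) = Σ_{j≥0} B_{j+1}(x)·X^j/j!. -/
/-!
Differentiate the generating function identity `G · (e^X − 1) = X · e^{xX}`, where
`G = Σ Bₙ(x) Xⁿ/n!`; the derivative of `G` is `Σ B_{j+1}(x) X^j/j!`. Multiplying the derivative of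
the identity by `e^X − 1` and eliminating `G · (e^X − 1)` with the identity itself gives the claim.
-/

open PowerSeries Nat

theorem PowerSeries.derivative_rescale {R : Type*} [CommSemiring R] (a : R) (f : R⟦X⟧) :
    d⁄dX R (rescale a f) = C a * rescale a (d⁄dX R f) := by
  ext n
  simp only [coeff_derivative, coeff_rescale, coeff_C_mul, pow_succ]
  ring

variable {A : Type*} [CommRing A] [Algebra ℚ A]

theorem PowerSeries.derivative_mk_div_factorial (c : ℕ → A) :
    d⁄dX A (mk fun n => (1 / n ! : ℚ) • c n) = mk fun n => (1 / n ! : ℚ) • c (n + 1) := by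
  ext n
  have hn : ((n + 1 : ℕ) : A) = algebraMap ℚ A (n + 1) := by simp
  rw [coeff_derivative, coeff_mk, coeff_mk, ← Nat.cast_succ, hn, mul_comm, ← Algebra.smul_def,
    smul_smul, factorial_succ]
  congr 1
  push_cast
  field_simp

theorem Polynomial.derivative_bernoulli_generating_function (t : A) :
    d⁄dX A (mk fun n => aeval t ((1 / n ! : ℚ) • bernoulli n)) =
      mk fun n => aeval t ((1 / n ! : ℚ) • bernoulli (n + 1)) := by
  simp only [map_smul]
  exact derivative_mk_div_factorial fun n => aeval t (bernoulli n)

/-- `(X·e^X/(e^X − 1) − x·X − 1) · e^{xX}/(1 − e^X) = Σ_{j≥0} B_{j+1}(x)·X^j/j!`,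
stated with the denominators `(e^X − 1)²` cleared (note `1/(1−e^X) = −1/(e^X−1)`). -/
theorem bernoulli_residue_series (x : ℝ) :
    -((PowerSeries.X * PowerSeries.exp ℝ -
          (PowerSeries.C x * PowerSeries.X + 1) * (PowerSeries.exp ℝ - 1)) *
        PowerSeries.rescale x (PowerSeries.exp ℝ)) =
      (PowerSeries.mk fun j =>
          Polynomial.aeval x ((1 / (j.factorial : ℚ)) • Polynomial.bernoulli (j + 1))) *
        (PowerSeries.exp ℝ - 1) ^ 2 := by
  have hG := Polynomial.bernoulli_generating_function x
  have hG' := congrArg (d⁄dX ℝ) hG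
  simp only [Derivation.leibniz, map_sub, Derivation.map_one_eq_zero, sub_zero, derivative_X,
    derivative_exp, derivative_rescale, Polynomial.derivative_bernoulli_generating_function,
    smul_eq_mul] at hG'
  linear_combination exp ℝ * hG - (exp ℝ - 1) * hG'
end

section
/- Let N ≥ 1 and k ≥ 0, and let ϱ^k be the horospherical map defined by ϱ^k(ψ)(g) = (N^k/(k!(k+2))) · Σ_{t ∈ (ℤ/N)²} ψ(g^{−1}t) · B_{k+2}(⟨t₂⟩/N) for ψ : (ℤ/N)² → ℚ and g ∈ GL₂(ℤ/N). Then for every ψ and every g, ϱ^k(ψ)(−g) = (−1)^k · ϱ^k(ψ)(g), where −g denotes the product of −id with g. -/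
open scoped Matrix

/-- The horospherical map `ϱ^k`: for `ψ : (ℤ/N)² → ℚ` and `g ∈ GL₂(ℤ/N)`,
`ϱ^k(ψ)(g) = (N^k/(k!(k+2))) Σ_{t ∈ (ℤ/N)²} ψ(g⁻¹t)·B_{k+2}(⟨t₂⟩/N)`. -/
noncomputable def horospherical (N k : ℕ) [NeZero N]
    (ψ : (Fin 2 → ZMod N) → ℚ)
    (g : Matrix.GeneralLinearGroup (Fin 2) (ZMod N)) : ℚ :=
  ((N : ℚ) ^ k / ((k.factorial : ℚ) * (k + 2))) *
    ∑ t : Fin 2 → ZMod N,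
      ψ (((g⁻¹ : Matrix.GeneralLinearGroup (Fin 2) (ZMod N)) :
            Matrix (Fin 2) (Fin 2) (ZMod N)).mulVec t) *
        Polynomial.eval (((t 1).val : ℚ) / N) (Polynomial.bernoulli (k + 2))


open Finset

lemma bernoulli_eval_neg_aux (n : ℕ) (x : ℚ) :
    (Polynomial.bernoulli n).eval (-x) = (-1) ^ n * (Polynomial.bernoulli n).eval (1 + x) := by
  rw [Polynomial.bernoulli_eval_one_add, Polynomial.bernoulli, Polynomial.eval_finset_sum,
    Polynomial.eval_finset_sum]
  simp only [Polynomial.eval_monomial]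
  have h1 : ∀ i ∈ range (n + 1),
      bernoulli i * (n.choose i : ℚ) * (-x) ^ (n - i)
        = (-1) ^ n * (bernoulli' i * (n.choose i : ℚ) * x ^ (n - i)) := by
    intro i hi
    rw [mem_range] at hi
    have key : ((-1 : ℚ)) ^ (n - i) = (-1) ^ n * (-1) ^ i := by
      have h2 : n + i = (n - i) + 2 * i := by omega
      rw [← pow_add, h2, pow_add, pow_mul]
      norm_num
    rw [neg_pow, bernoulli'_eq_bernoulli, key]
    ring
  rw [Finset.sum_congr rfl h1, ← Finset.mul_sum]
  congr 1
  have hone : bernoulli' 1 - bernoulli 1 = 1 := by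
    rw [bernoulli'_one, bernoulli_one]; norm_num
  have h2 : ∑ i ∈ range (n + 1), (bernoulli' i - bernoulli i) * (n.choose i : ℚ) * x ^ (n - i)
      = n * x ^ (n - 1) := by
    rw [Finset.sum_eq_single 1]
    · rw [hone, Nat.choose_one_right]; ring
    · intro i _ hi
      rw [bernoulli_eq_bernoulli'_of_ne_one hi, sub_self, zero_mul, zero_mul]
    · intro h
      have : n = 0 := by
        by_contra h0
        exact h (mem_range.mpr (by omega))
      subst this; simp
  calc ∑ i ∈ range (n + 1), bernoulli' i * (n.choose i : ℚ) * x ^ (n - i)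
      = ∑ i ∈ range (n + 1), ((bernoulli' i - bernoulli i) * (n.choose i : ℚ) * x ^ (n - i)
          + bernoulli i * (n.choose i : ℚ) * x ^ (n - i)) := by
        apply Finset.sum_congr rfl; intros; ring
    _ = _ := by rw [Finset.sum_add_distrib, h2]; ring

lemma bernoulli_eval_one_sub (n : ℕ) (x : ℚ) :
    (Polynomial.bernoulli n).eval (1 - x) = (-1) ^ n * (Polynomial.bernoulli n).eval x := by
  have := bernoulli_eval_neg_aux n (x - 1)
  rw [neg_sub] at this
  simpa using this

lemma bernoulli_eval_neg_zmod (N k : ℕ) [NeZero N] (s : ZMod N) :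
    Polynomial.eval (((-s).val : ℚ) / N) (Polynomial.bernoulli (k + 2))
      = (-1) ^ k * Polynomial.eval (((s).val : ℚ) / N) (Polynomial.bernoulli (k + 2)) := by
  rcases eq_or_ne s 0 with rfl | hs
  · rw [neg_zero]
    rcases Nat.even_or_odd k with he | ho
    · rw [he.neg_one_pow, one_mul]
    · have hodd : Odd (k + 2) := by rw [Nat.odd_iff] at ho ⊢; omega
      have hb : bernoulli (k + 2) = 0 := by
        rw [bernoulli_eq_bernoulli'_of_ne_one (by omega)]
        exact bernoulli'_eq_zero_of_odd hodd (by omega)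
      simp [hb, ho.neg_one_pow]
  · rw [ZMod.neg_val, if_neg hs]
    have hle : s.val ≤ N := le_of_lt (ZMod.val_lt s)
    have hN0 : (N : ℚ) ≠ 0 := Nat.cast_ne_zero.mpr (NeZero.ne N)
    have hcast : ((N - s.val : ℕ) : ℚ) / N = 1 - (s.val : ℚ) / N := by
      rw [Nat.cast_sub hle]
      field_simp
    rw [hcast, bernoulli_eval_one_sub]
    congr 1
    rw [pow_add]
    norm_num

/-- `ϱ^k(ψ)(−g) = (−1)^k · ϱ^k(ψ)(g)`: the horospherical map takes values in the
`(−1)^k`-eigenspace of `−id ∈ GL₂(ℤ/N)`. -/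
theorem horospherical_neg (N : ℕ) [NeZero N] (hN : 1 ≤ N) (k : ℕ)
    (ψ : (Fin 2 → ZMod N) → ℚ)
    (g : Matrix.GeneralLinearGroup (Fin 2) (ZMod N)) :
    horospherical N k ψ ((-1) * g) = (-1) ^ k * horospherical N k ψ g := by
  unfold horospherical
  have h1 : (((((-1) * g)⁻¹ : Matrix.GeneralLinearGroup (Fin 2) (ZMod N))) :
      Matrix (Fin 2) (Fin 2) (ZMod N))
      = -((g⁻¹ : Matrix.GeneralLinearGroup (Fin 2) (ZMod N)) :
          Matrix (Fin 2) (Fin 2) (ZMod N)) := by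
    rw [mul_inv_rev, inv_neg_one, mul_neg_one, Units.val_neg]
  rw [h1]
  have h2 : ∑ t : Fin 2 → ZMod N,
      ψ ((-((g⁻¹ : Matrix.GeneralLinearGroup (Fin 2) (ZMod N)) :
            Matrix (Fin 2) (Fin 2) (ZMod N))).mulVec t) *
        Polynomial.eval (((t 1).val : ℚ) / N) (Polynomial.bernoulli (k + 2))
      = ∑ t : Fin 2 → ZMod N,
      ψ (((g⁻¹ : Matrix.GeneralLinearGroup (Fin 2) (ZMod N)) :
            Matrix (Fin 2) (Fin 2) (ZMod N)).mulVec t) *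
        ((-1) ^ k *
          Polynomial.eval (((t 1).val : ℚ) / N) (Polynomial.bernoulli (k + 2))) := by
    apply Fintype.sum_equiv (Equiv.neg (Fin 2 → ZMod N))
    intro t
    simp only [Equiv.neg_apply, Matrix.mulVec_neg, Matrix.neg_mulVec, Pi.neg_apply,
      bernoulli_eval_neg_zmod N k (t 1)]
    have : ((-1 : ℚ)) ^ k * ((-1) ^ k : ℚ) = 1 := by
      rw [← pow_add, Even.neg_one_pow ⟨k, rfl⟩]
    rw [← mul_assoc ((-1:ℚ)^k), this]
    ring
  rw [h2]
  rw [Finset.mul_sum, Finset.mul_sum, Finset.mul_sum]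
  apply Finset.sum_congr rfl
  intros
  ring
end
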